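/- arXiv:math/0408114 — 3 statements merged into one kernel-verified Lean document; each statement's English description precedes it below -/
import Mathlib

section
/- Let n ≥ 1. If P : Δ_n → ℤ is a quasi-hive (satisfies hive conditions (i) and (ii)), then P̂ is a Gelfand–Tsetlin pattern of size n: P̂(i,j) ≥ P̂(i−1,j) and P̂(i−1,j) ≥ P̂(i,j+1) whenever both sides are defined. -/
def inDelta (n x y z : ℤ) : Prop := 0 ≤ x ∧ 0 ≤ y ∧ 0 ≤ z ∧ x + y + z = n

instance (n x y z : ℤ) : Decidable (inDelta n x y z) :=
  inferInstanceAs (Decidable (0 ≤ x ∧ 0 ≤ y ∧ 0 ≤ z ∧ x + y + z = n))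

/-- Hive inequality (i): horizontal rhombi of the first kind. -/
def HiveCondI (n : ℤ) (P : ℤ → ℤ → ℤ → ℤ) : Prop :=
  ∀ x y z : ℤ, inDelta n x y z → inDelta n x (y+1) (z-1) → inDelta n (x+1) y (z-1) →
    inDelta n (x-1) (y+1) z →
    P (x+1) y (z-1) + P (x-1) (y+1) z ≤ P x y z + P x (y+1) (z-1)

/-- Hive inequality (ii): horizontal rhombi of the second kind. -/
def HiveCondII (n : ℤ) (P : ℤ → ℤ → ℤ → ℤ) : Prop :=
  ∀ x y z : ℤ, inDelta n x y z → inDelta n (x+1) y (z-1) → inDelta n x (y+1) (z-1) →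
    inDelta n (x+1) (y-1) z →
    P x (y+1) (z-1) + P (x+1) (y-1) z ≤ P x y z + P (x+1) y (z-1)

/-- Hive inequality (iii): vertical rhombi. -/
def HiveCondIII (n : ℤ) (P : ℤ → ℤ → ℤ → ℤ) : Prop :=
  ∀ x y z : ℤ, inDelta n x y z → inDelta n (x+1) (y-1) z → inDelta n (x+1) y (z-1) →
    inDelta n x (y-1) (z+1) →
    P (x+1) y (z-1) + P x (y-1) (z+1) ≤ P x y z + P (x+1) (y-1) z

/-- A quasi-hive: satisfies conditions (i) and (ii) only. -/
def IsQuasiHive (n : ℤ) (P : ℤ → ℤ → ℤ → ℤ) : Prop := HiveCondI n P ∧ HiveCondII n P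

/-- A hive of size `n`, normalized by `P 0 0 n = 0` and encoded as the function on `ℤ³`
which is zero outside the triangle `Δ_n`. -/
def IsHive (n : ℤ) (P : ℤ → ℤ → ℤ → ℤ) : Prop :=
  HiveCondI n P ∧ HiveCondII n P ∧ HiveCondIII n P ∧ P 0 0 n = 0 ∧
    ∀ x y z : ℤ, ¬ inDelta n x y z → P x y z = 0

/-- `lam 1, …, lam n` is weakly decreasing. -/
def WeaklyDecr (n : ℤ) (lam : ℤ → ℤ) : Prop :=
  ∀ k : ℤ, 1 ≤ k → k + 1 ≤ n → lam (k+1) ≤ lam k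

/-- The set `HIVE_{λμ}^ν`. -/
def HiveSet (n : ℤ) (lam mu nu : ℤ → ℤ) : Set (ℤ → ℤ → ℤ → ℤ) :=
  {P | IsHive n P ∧ ∀ k : ℤ, 1 ≤ k → k ≤ n →
    P (n-k) k 0 - P (n-k+1) (k-1) 0 = lam k ∧
    P k 0 (n-k) - P (k-1) 0 (n-k+1) = mu k ∧
    P 0 k (n-k) - P 0 (k-1) (n-k+1) = nu k}

/-- `P̂(i,j) = P(i−j,j,n−i) − P(i−j+1,j−1,n−i)`: row differences of a (quasi-)hive. -/
def hatGT (n : ℤ) (P : ℤ → ℤ → ℤ → ℤ) : ℤ → ℤ → ℤ := fun i j =>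
  P (i-j) j (n-i) - P (i-j+1) (j-1) (n-i)

/-- A Gelfand–Tsetlin pattern of size `n` (entries `T i j` for `1 ≤ j ≤ i ≤ n`). -/
def IsGTPattern (n : ℤ) (T : ℤ → ℤ → ℤ) : Prop :=
  (∀ i j : ℤ, 1 ≤ j → j ≤ i - 1 → i ≤ n → T (i-1) j ≤ T i j) ∧
  (∀ i j : ℤ, 1 ≤ j → j + 1 ≤ i → i ≤ n → T i (j+1) ≤ T (i-1) j)

/-- if `P` is a quasi-hive then `P̂` is a Gelfand–Tsetlin pattern. -/
theorem stmt13 (n : ℤ) (hn : 1 ≤ n) (P : ℤ → ℤ → ℤ → ℤ) (hP : IsQuasiHive n P) :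
    IsGTPattern n (hatGT n P) := by
  obtain ⟨h1, h2⟩ := hP
  constructor
  · intro i j hj hji hi
    have := h1 (i-j) (j-1) (n-i+1)
      ⟨by omega, by omega, by omega, by ring⟩
      ⟨by omega, by omega, by omega, by ring⟩
      ⟨by omega, by omega, by omega, by ring⟩
      ⟨by omega, by omega, by omega, by ring⟩
    unfold hatGT
    have e1 : i - 1 - j = i - j - 1 := by ring
    have e2 : i - 1 - j + 1 = i - j := by ring
    have e3 : n - (i-1) = n - i + 1 := by ring
    have e4 : (j-1)+1 = j := by ring
    have e5 : (n-i+1)-1 = n-i := by ring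
    have e6 : (i-j)+1 = i-j+1 := by ring
    have e7 : (i-j)-1 = i-j-1 := by ring
    rw [e4, e5, e6, e7] at this
    rw [e2, e1, e3]
    linarith
  · intro i j hj hji hi
    have := h2 (i-j-1) j (n-i+1)
      ⟨by omega, by omega, by omega, by ring⟩
      ⟨by omega, by omega, by omega, by ring⟩
      ⟨by omega, by omega, by omega, by ring⟩
      ⟨by omega, by omega, by omega, by ring⟩
    unfold hatGT
    have e1 : i - (j+1) = i - j - 1 := by ring
    have e2 : i - (j+1) + 1 = i - j := by ring
    have e3 : i - 1 - j = i - j - 1 := by ring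
    have e4 : i - 1 - j + 1 = i - j := by ring
    have e5 : n - (i-1) = n - i + 1 := by ring
    have e6 : (j+1)-1 = j := by ring
    have e7 : (n-i+1)-1 = n-i := by ring
    have e8 : (i-j-1)+1 = i-j := by ring
    rw [e7, e8] at this
    rw [e2, e1, e6, e4, e3, e5]
    linarith
end

section
/- Let n ≥ 1. If P : Δ_n → ℤ satisfies hive conditions (i) and (iii), then P̃ is a Gelfand–Tsetlin pattern of size n. If moreover λ, μ, ν ∈ ℤⁿ are weakly decreasing and P ∈ HIVE_{λμ}^ν, then P̃ has base μ, the weight of P̃ is (ν_n − λ_n, ν_{n−1} − λ_{n−1}, …, ν_1 − λ_1), and φ_i(P̃) ≤ λ_{n−i} − λ_{n−i+1} for all 1 ≤ i ≤ n−1. -/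
/-- `P̃(i,j) = P(j,n−i,i−j) − P(j−1,n−i,i−j+1)`: north-east differences of a hive. -/
def tildeGT (n : ℤ) (P : ℤ → ℤ → ℤ → ℤ) : ℤ → ℤ → ℤ := fun i j =>
  P j (n-i) (i-j) - P (j-1) (n-i) (i-j+1)

/-- The `i`-th entry of the weight of a GT pattern: difference of consecutive row sums. -/
noncomputable def GTweight (T : ℤ → ℤ → ℤ) (i : ℤ) : ℤ :=
  (∑ j ∈ Finset.Icc 1 i, T i j) - ∑ j ∈ Finset.Icc 1 (i-1), T (i-1) j

/-- Entry of a GT pattern with the conventions `T(i,j) = 0` for `j > i` or `j < 1`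
(in particular `T(0,j) = 0`). -/
def entGT (T : ℤ → ℤ → ℤ) (i j : ℤ) : ℤ := if 1 ≤ j ∧ j ≤ i then T i j else 0

instance (i j : ℤ) : Decidable (1 ≤ j ∧ j ≤ i) := inferInstance

/-- Number of entries equal to `m` lying in columns `≤ c` of the tableau corresponding
to the GT pattern `T`. -/
noncomputable def cntLEcolGT (T : ℤ → ℤ → ℤ) (m c : ℤ) : ℤ :=
  ∑ j ∈ Finset.Icc 1 m, max 0 (min (entGT T m j) c - entGT T (m-1) j)

-- auxiliary section to append
section StmtAux

lemma splitIoc' (f : ℤ → ℤ) {a b c : ℤ} (h1 : a ≤ b) (h2 : b ≤ c) :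
    ∑ j ∈ Finset.Ioc a c, f j = (∑ j ∈ Finset.Ioc a b, f j) + ∑ j ∈ Finset.Ioc b c, f j := by
  rw [← Finset.Ioc_union_Ioc_eq_Ioc h1 h2, Finset.sum_union]
  rw [Finset.disjoint_left]
  intro x hx hx'
  simp only [Finset.mem_Ioc] at hx hx'
  omega

lemma succIoc (f : ℤ → ℤ) {k : ℤ} (hk : 0 ≤ k) :
    ∑ j ∈ Finset.Ioc (0:ℤ) (k+1), f j = (∑ j ∈ Finset.Ioc (0:ℤ) k, f j) + f (k+1) := by
  rw [splitIoc' f hk (by omega)]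
  congr 1
  rw [show Finset.Ioc k (k+1) = {k+1} from by ext x; simp [Finset.mem_Ioc]; omega]
  simp

lemma succIoc' (f : ℤ → ℤ) {k : ℤ} (hk : 1 ≤ k) :
    ∑ j ∈ Finset.Ioc (0:ℤ) k, f j = (∑ j ∈ Finset.Ioc (0:ℤ) (k-1), f j) + f k := by
  have h := succIoc f (k := k-1) (by omega)
  rw [show k-1+1 = k by ring] at h
  exact h

lemma telIoc (f : ℤ → ℤ) : ∀ m : ℤ, 0 ≤ m →
    ∑ j ∈ Finset.Ioc (0:ℤ) m, (f j - f (j-1)) = f m - f 0 := by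
  refine Int.le_induction ?_ ?_
  · simp
  · intro m hm ih
    rw [succIoc _ hm, ih]
    ring_nf

lemma IccIoc (m : ℤ) : Finset.Icc (1:ℤ) m = Finset.Ioc 0 m := by
  ext x; simp only [Finset.mem_Icc, Finset.mem_Ioc]; omega

lemma sum_split (f : ℤ → ℤ) (c : ℤ) {k m : ℤ} (h0 : 0 ≤ k) (hkm : k ≤ m)
    (hpos : ∀ j, 1 ≤ j → j ≤ k → c < f j)
    (hneg : ∀ j, k + 1 ≤ j → j ≤ m → f j ≤ c) :
    ∑ j ∈ Finset.Ioc (0:ℤ) m, max (f j - c) 0 = ∑ j ∈ Finset.Ioc (0:ℤ) k, (f j - c) := by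
  rw [splitIoc' _ h0 hkm]
  have h1 : ∑ j ∈ Finset.Ioc (0:ℤ) k, max (f j - c) 0 = ∑ j ∈ Finset.Ioc (0:ℤ) k, (f j - c) := by
    refine Finset.sum_congr rfl fun j hj => ?_
    simp only [Finset.mem_Ioc] at hj
    have := hpos j (by omega) hj.2
    omega
  have h2 : ∑ j ∈ Finset.Ioc k m, max (f j - c) 0 = 0 := by
    refine Finset.sum_eq_zero fun j hj => ?_
    simp only [Finset.mem_Ioc] at hj
    have := hneg j (by omega) hj.2
    omega
  rw [h1, h2, add_zero]

lemma sum_split2 (f : ℤ → ℤ) (c : ℤ) {k m : ℤ} (h0 : 0 ≤ k) (hkm : k + 1 ≤ m)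
    (hpos : ∀ j, 1 ≤ j → j ≤ k → c < f j)
    (hneg : ∀ j, k + 2 ≤ j → j ≤ m → f j ≤ c) :
    ∑ j ∈ Finset.Ioc (0:ℤ) m, max (f j - c) 0 =
      (∑ j ∈ Finset.Ioc (0:ℤ) k, (f j - c)) + max (f (k+1) - c) 0 := by
  rw [splitIoc' _ (by omega : (0:ℤ) ≤ k+1) hkm, succIoc _ h0]
  have h1 : ∑ j ∈ Finset.Ioc (0:ℤ) k, max (f j - c) 0 = ∑ j ∈ Finset.Ioc (0:ℤ) k, (f j - c) := by
    refine Finset.sum_congr rfl fun j hj => ?_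
    simp only [Finset.mem_Ioc] at hj
    have := hpos j (by omega) hj.2
    omega
  have h2 : ∑ j ∈ Finset.Ioc (k+1) m, max (f j - c) 0 = 0 := by
    refine Finset.sum_eq_zero fun j hj => ?_
    simp only [Finset.mem_Ioc] at hj
    have := hneg j (by omega) hj.2
    omega
  rw [h1, h2, add_zero]

lemma chainmono (b : ℤ → ℤ) (i : ℤ) (hmono : ∀ j, 1 ≤ j → j ≤ i - 1 → b (j+1) ≤ b j) :
    ∀ q, 1 ≤ q → q ≤ i → ∀ p, 1 ≤ p → p ≤ q → b q ≤ b p := by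
  refine Int.le_induction ?_ ?_
  · intro _ p hp hpq; have : p = 1 := by omega
    simp [this]
  · intro q hq ih hqi p hp hpq
    rcases eq_or_lt_of_le hpq with h | h
    · simp [← h]
    · exact le_trans (hmono q hq (by omega)) (ih (by omega) p hp (by omega))

lemma exists_k (b : ℤ → ℤ) (c : ℤ) :
    ∀ i : ℤ, 0 ≤ i → (∀ j, 1 ≤ j → j ≤ i - 1 → b (j+1) ≤ b j) →
    ∃ k, 0 ≤ k ∧ k ≤ i ∧ (∀ j, 1 ≤ j → j ≤ k → c < b j) ∧ (∀ j, k + 1 ≤ j → j ≤ i → b j ≤ c) := by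
  refine Int.le_induction ?_ ?_
  · exact fun _ => ⟨0, le_refl _, le_refl _, fun j h1 h2 => by omega, fun j h1 h2 => by omega⟩
  · intro i hi ih hmono
    obtain ⟨k, hk0, hki, hkpos, hkneg⟩ := ih (fun j h1 h2 => hmono j h1 (by omega))
    by_cases hc : c < b (i+1)
    · refine ⟨i+1, by omega, le_refl _, fun j h1 h2 => ?_, fun j h1 h2 => by omega⟩
      exact lt_of_lt_of_le hc (chainmono b (i+1) hmono (i+1) (by omega) le_rfl j h1 h2)
    · refine ⟨k, hk0, by omega, hkpos, fun j h1 h2 => ?_⟩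
      rcases eq_or_lt_of_le h2 with h | h
      · simpa [h] using not_lt.mp hc
      · exact hkneg j h1 (by omega)

lemma coreIneq (a b d : ℤ → ℤ) (i c N : ℤ) (hi : 1 ≤ i) (hc : 0 ≤ c) (hN : 0 ≤ N)
    (F1 : ∀ j, 1 ≤ j → j ≤ i-1 → a j ≤ b j)
    (F2 : ∀ j, 1 ≤ j → j ≤ i-1 → b (j+1) ≤ a j)
    (F3 : ∀ j, 1 ≤ j → j ≤ i → b j ≤ d j)
    (F4 : ∀ j, 1 ≤ j → j ≤ i → d (j+1) ≤ b j)
    (F5 : ∀ j, 0 ≤ j → j ≤ i-1 →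
      (∑ l ∈ Finset.Ioc (0:ℤ) (j+1), d l) - (∑ l ∈ Finset.Ioc (0:ℤ) (j+1), b l) ≤
      N + (∑ l ∈ Finset.Ioc (0:ℤ) j, b l) - (∑ l ∈ Finset.Ioc (0:ℤ) j, a l)) :
    (∑ j ∈ Finset.Ioc (0:ℤ) (i-1), max (a j - c) 0)
      + (∑ j ∈ Finset.Ioc (0:ℤ) (i+1), max (d j - c) 0)
      ≤ 2 * (∑ j ∈ Finset.Ioc (0:ℤ) i, max (b j - c) 0) + N := by
  have hmono : ∀ j, 1 ≤ j → j ≤ i - 1 → b (j+1) ≤ b j :=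
    fun j h1 h2 => le_trans (F2 j h1 h2) (F1 j h1 h2)
  obtain ⟨k, hk0, hki, hkpos, hkneg⟩ := exists_k b c i (by omega) hmono
  have F5' : ∀ j, 0 ≤ j → j ≤ i-1 →
      (∑ l ∈ Finset.Ioc (0:ℤ) (j+1), (d l - c)) - (∑ l ∈ Finset.Ioc (0:ℤ) (j+1), (b l - c)) ≤
      N + (∑ l ∈ Finset.Ioc (0:ℤ) j, (b l - c)) - (∑ l ∈ Finset.Ioc (0:ℤ) j, (a l - c)) := by
    intro j h1 h2
    have h5 := F5 j h1 h2
    simp only [Finset.sum_sub_distrib] at *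
    linarith
  have hSB : ∑ j ∈ Finset.Ioc (0:ℤ) i, max (b j - c) 0 = ∑ j ∈ Finset.Ioc (0:ℤ) k, (b j - c) :=
    sum_split b c hk0 hki hkpos hkneg
  have hSD : ∑ j ∈ Finset.Ioc (0:ℤ) (i+1), max (d j - c) 0 =
      (∑ j ∈ Finset.Ioc (0:ℤ) k, (d j - c)) + max (d (k+1) - c) 0 := by
    refine sum_split2 d c hk0 (by omega) (fun j h1 h2 => ?_) (fun j h1 h2 => ?_)
    · exact lt_of_lt_of_le (hkpos j h1 h2) (F3 j h1 (by omega))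
    · have h4 : d (j-1+1) ≤ b (j-1) := F4 (j-1) (by omega) (by omega)
      rw [show j-1+1 = j by ring] at h4
      exact le_trans h4 (hkneg (j-1) (by omega) (by omega))
  rw [hSB, hSD]
  rcases eq_or_lt_of_le hki with hkI | hkI
  · subst hkI
    have hSA : ∑ j ∈ Finset.Ioc (0:ℤ) (k-1), max (a j - c) 0
        = ∑ j ∈ Finset.Ioc (0:ℤ) (k-1), (a j - c) := by
      refine sum_split a c (by omega) le_rfl (fun j h1 h2 => ?_) (fun j h1 h2 => by omega)
      exact lt_of_lt_of_le (hkpos (j+1) (by omega) (by omega)) (F2 j h1 h2)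
    rw [hSA]
    have h5 := F5' (k-1) (by omega) (by omega)
    rw [show k-1+1 = k by ring] at h5
    have hstep : ∑ j ∈ Finset.Ioc (0:ℤ) k, (b j - c)
        = (∑ j ∈ Finset.Ioc (0:ℤ) (k-1), (b j - c)) + (b k - c) :=
      succIoc' (fun j => b j - c) (by omega)
    have h4 : d (k+1) ≤ b k := F4 k (by omega) le_rfl
    have hbk : c < b k := hkpos k (by omega) le_rfl
    omega
  · rcases eq_or_lt_of_le hk0 with hk00 | hk1
    · have hk00' : k = 0 := hk00.symm
      subst hk00'
      have hSA : ∑ j ∈ Finset.Ioc (0:ℤ) (i-1), max (a j - c) 0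
          = ∑ j ∈ Finset.Ioc (0:ℤ) 0, (a j - c) := by
        refine sum_split a c le_rfl (by omega) (fun j h1 h2 => by omega) (fun j h1 h2 => ?_)
        exact le_trans (F1 j (by omega) h2) (hkneg j (by omega) (by omega))
      rw [hSA, show (0:ℤ)+1 = 1 by ring]
      simp only [Finset.Ioc_self, Finset.sum_empty]
      have h5 := F5' 0 le_rfl (by omega)
      rw [show (0:ℤ)+1 = 1 by ring] at h5
      simp only [Finset.Ioc_self, Finset.sum_empty] at h5
      have hone : ∀ f : ℤ → ℤ, ∑ l ∈ Finset.Ioc (0:ℤ) 1, f l = f 1 := by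
        intro f
        rw [show Finset.Ioc (0:ℤ) 1 = {1} from by ext x; simp [Finset.mem_Ioc]; omega]
        simp
      rw [hone, hone] at h5
      have hb1 : b 1 ≤ c := hkneg 1 (by omega) hi
      omega
    · have hSA : ∑ j ∈ Finset.Ioc (0:ℤ) (i-1), max (a j - c) 0 =
          (∑ j ∈ Finset.Ioc (0:ℤ) (k-1), (a j - c)) + max (a (k-1+1) - c) 0 := by
        refine sum_split2 a c (by omega) (by omega) (fun j h1 h2 => ?_) (fun j h1 h2 => ?_)
        · exact lt_of_lt_of_le (hkpos (j+1) (by omega) (by omega)) (F2 j h1 (by omega))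
        · exact le_trans (F1 j (by omega) h2) (hkneg j (by omega) (by omega))
      rw [show k-1+1 = k by ring] at hSA
      rw [hSA]
      have h5a := F5' (k-1) (by omega) (by omega)
      rw [show k-1+1 = k by ring] at h5a
      have h5b := F5' k (by omega) (by omega)
      have hstepb : ∑ j ∈ Finset.Ioc (0:ℤ) k, (b j - c)
          = (∑ j ∈ Finset.Ioc (0:ℤ) (k-1), (b j - c)) + (b k - c) :=
        succIoc' (fun j => b j - c) (by omega)
      have hstepb2 : ∑ j ∈ Finset.Ioc (0:ℤ) (k+1), (b j - c)
          = (∑ j ∈ Finset.Ioc (0:ℤ) k, (b j - c)) + (b (k+1) - c) :=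
        succIoc (fun j => b j - c) hk0
      have hstepd2 : ∑ j ∈ Finset.Ioc (0:ℤ) (k+1), (d j - c)
          = (∑ j ∈ Finset.Ioc (0:ℤ) k, (d j - c)) + (d (k+1) - c) :=
        succIoc (fun j => d j - c) hk0
      have hsteapa : ∑ j ∈ Finset.Ioc (0:ℤ) k, (a j - c)
          = (∑ j ∈ Finset.Ioc (0:ℤ) (k-1), (a j - c)) + (a k - c) :=
        succIoc' (fun j => a j - c) (by omega)
      have hF1k : a k ≤ b k := F1 k (by omega) (by omega)
      have hF2k : b (k+1) ≤ a k := F2 k (by omega) (by omega)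
      have hbk : c < b k := hkpos k (by omega) le_rfl
      have hbk1 : b (k+1) ≤ c := hkneg (k+1) (by omega) (by omega)
      rw [hstepb2, hstepd2, hsteapa] at h5b
      omega

lemma gtOfHive (n : ℤ) (P : ℤ → ℤ → ℤ → ℤ)
    (h1 : HiveCondI n P) (h3 : HiveCondIII n P) : IsGTPattern n (tildeGT n P) := by
  constructor
  · intro i j hj hji hin
    have H := h3 (j-1) (n-i+1) (i-j) (by simp [inDelta]; omega) (by simp [inDelta]; omega)
      (by simp [inDelta]; omega) (by simp [inDelta]; omega)
    simp only [tildeGT]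
    ring_nf at H ⊢
    linarith
  · intro i j hj hji hin
    have H := h1 j (n-i) (i-j) (by simp [inDelta]; omega) (by simp [inDelta]; omega)
      (by simp [inDelta]; omega) (by simp [inDelta]; omega)
    simp only [tildeGT]
    ring_nf at H ⊢
    linarith

lemma cnt_eq (T : ℤ → ℤ → ℤ) (m c : ℤ) (hm : 1 ≤ m) (hc : 0 ≤ c)
    (hab : ∀ j, 1 ≤ j → j ≤ m-1 → T (m-1) j ≤ T m j) :
    cntLEcolGT T m c =
      ((∑ j ∈ Finset.Ioc (0:ℤ) (m-1), T m j) - (∑ j ∈ Finset.Ioc (0:ℤ) (m-1), T (m-1) j))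
      - (∑ j ∈ Finset.Ioc (0:ℤ) (m-1), max (T m j - c) 0)
      + (∑ j ∈ Finset.Ioc (0:ℤ) (m-1), max (T (m-1) j - c) 0)
      + (max (T m m) 0 - max (T m m - c) 0) := by
  unfold cntLEcolGT
  rw [show Finset.Icc (1:ℤ) m = insert m (Finset.Ioc 0 (m-1)) from by
    ext x; simp only [Finset.mem_Icc, Finset.mem_Ioc, Finset.mem_insert]; omega]
  rw [Finset.sum_insert (by simp only [Finset.mem_Ioc]; omega)]
  have hhead : max 0 (min (entGT T m m) c - entGT T (m-1) m)
      = max (T m m) 0 - max (T m m - c) 0 := by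
    rw [show entGT T m m = T m m from if_pos ⟨hm, le_rfl⟩,
        show entGT T (m-1) m = 0 from if_neg (by omega)]
    omega
  have hsum : ∑ j ∈ Finset.Ioc (0:ℤ) (m-1), max 0 (min (entGT T m j) c - entGT T (m-1) j)
      = ∑ j ∈ Finset.Ioc (0:ℤ) (m-1),
          ((T m j - T (m-1) j) - max (T m j - c) 0 + max (T (m-1) j - c) 0) := by
    refine Finset.sum_congr rfl fun j hj => ?_
    simp only [Finset.mem_Ioc] at hj
    rw [show entGT T m j = T m j from if_pos ⟨by omega, by omega⟩,
        show entGT T (m-1) j = T (m-1) j from if_pos ⟨by omega, by omega⟩]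
    have := hab j (by omega) hj.2
    omega
  rw [hhead, hsum, Finset.sum_add_distrib, Finset.sum_sub_distrib, Finset.sum_sub_distrib]
  ring

end StmtAux

/-- if `P` satisfies hive conditions (i) and (iii) then `P̃` is a GT
pattern; and for `P ∈ HIVE_{λμ}^ν`, `P̃` has base `μ`, weight
`(ν_n − λ_n, …, ν_1 − λ_1)`, and satisfies `φ_i(P̃) ≤ λ_{n−i} − λ_{n−i+1}`. -/
theorem stmt15 (n : ℤ) (hn : 1 ≤ n) (P : ℤ → ℤ → ℤ → ℤ) :
    (HiveCondI n P → HiveCondIII n P → IsGTPattern n (tildeGT n P)) ∧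
    (∀ lam mu nu : ℤ → ℤ, WeaklyDecr n lam → WeaklyDecr n mu → WeaklyDecr n nu →
      P ∈ HiveSet n lam mu nu →
      (∀ k : ℤ, 1 ≤ k → k ≤ n → tildeGT n P n k = mu k) ∧
      (∀ i : ℤ, 1 ≤ i → i ≤ n →
        GTweight (tildeGT n P) i = nu (n - i + 1) - lam (n - i + 1)) ∧
      (∀ i c : ℤ, 1 ≤ i → i ≤ n - 1 → 0 ≤ c →
        cntLEcolGT (tildeGT n P) i c - cntLEcolGT (tildeGT n P) (i+1) c ≤
          lam (n - i) - lam (n - i + 1))) := by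
  constructor
  · exact fun h1 h3 => gtOfHive n P h1 h3
  · intro lam mu nu hdlam hdmu hdnu hP
    obtain ⟨hHive, hbd⟩ := hP
    obtain ⟨hI, hII, hIII, -, -⟩ := hHive
    have hGT := gtOfHive n P hI hIII
    refine ⟨?_, ?_, ?_⟩
    · -- base is mu
      intro k hk1 hk2
      have hmu := (hbd k hk1 hk2).2.1
      simp only [tildeGT, sub_self]
      exact hmu
    · -- weight
      intro i hi1 hi2
      unfold GTweight
      rw [IccIoc, IccIoc]
      have t1 : ∑ l ∈ Finset.Ioc (0:ℤ) i, tildeGT n P i l = P i (n-i) 0 - P 0 (n-i) i := by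
        have h0 := telIoc (fun j => P j (n-i) (i-j)) i (by omega)
        rw [show i-(0:ℤ) = i by ring, show i - i = (0:ℤ) by ring] at h0
        rw [← h0]
        refine Finset.sum_congr rfl fun l _ => ?_
        simp only [tildeGT]
        ring_nf
      have t2 : ∑ l ∈ Finset.Ioc (0:ℤ) (i-1), tildeGT n P (i-1) l
          = P (i-1) (n-i+1) 0 - P 0 (n-i+1) (i-1) := by
        have h0 := telIoc (fun j => P j (n-i+1) (i-1-j)) (i-1) (by omega)
        rw [show i-1-((i:ℤ)-1) = (0:ℤ) by ring, show i-1-(0:ℤ) = i-1 by ring] at h0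
        rw [← h0]
        refine Finset.sum_congr rfl fun l _ => ?_
        simp only [tildeGT]
        ring_nf
      rw [t1, t2]
      have hlam := (hbd (n-i+1) (by omega) (by omega)).1
      have hnu := (hbd (n-i+1) (by omega) (by omega)).2.2
      ring_nf at hlam hnu ⊢
      linarith
    · -- the phi bound
      intro i c hi1 hi2 hc
      -- telescoped row sums
      have ta : ∀ m : ℤ, 0 ≤ m → ∑ l ∈ Finset.Ioc (0:ℤ) m, tildeGT n P (i-1) l
          = P m (n-i+1) (i-1-m) - P 0 (n-i+1) (i-1) := by
        intro m hm
        have h0 := telIoc (fun j => P j (n-i+1) (i-1-j)) m hm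
        rw [show i-1-(0:ℤ) = i-1 by ring] at h0
        rw [← h0]
        refine Finset.sum_congr rfl fun l _ => ?_
        simp only [tildeGT]
        ring_nf
      have tg : ∀ m : ℤ, 0 ≤ m → ∑ l ∈ Finset.Ioc (0:ℤ) m, tildeGT n P i l
          = P m (n-i) (i-m) - P 0 (n-i) i := by
        intro m hm
        have h0 := telIoc (fun j => P j (n-i) (i-j)) m hm
        rw [show i-(0:ℤ) = i by ring] at h0
        rw [← h0]
        refine Finset.sum_congr rfl fun l _ => ?_
        simp only [tildeGT]
        ring_nf
      have th : ∀ m : ℤ, 0 ≤ m → ∑ l ∈ Finset.Ioc (0:ℤ) m, tildeGT n P (i+1) l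
          = P m (n-i-1) (i+1-m) - P 0 (n-i-1) (i+1) := by
        intro m hm
        have h0 := telIoc (fun j => P j (n-i-1) (i+1-j)) m hm
        rw [show i+1-(0:ℤ) = i+1 by ring] at h0
        rw [← h0]
        refine Finset.sum_congr rfl fun l _ => ?_
        simp only [tildeGT]
        ring_nf
      -- boundary equations (canonical forms)
      have hnuA := (hbd (n-i) (by omega) (by omega)).2.2
      have hnuB := (hbd (n-i+1) (by omega) (by omega)).2.2
      have hlamA := (hbd (n-i) (by omega) (by omega)).1
      have hlamB := (hbd (n-i+1) (by omega) (by omega)).1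
      rw [show n-(n-i) = i by ring] at hnuA hlamA
      rw [show n-(n-i+1) = i-1 by ring, show n-i+1-1 = n-i by ring,
          show (i:ℤ)-1+1 = i by ring] at hnuB hlamB
      -- core inequality
      have hcore := coreIneq (tildeGT n P (i-1)) (tildeGT n P i) (tildeGT n P (i+1))
        i c (nu (n-i) - nu (n-i+1)) hi1 hc
        (by
          have := hdnu (n-i) (by omega) (by omega)
          omega)
        (fun j h1 h2 => hGT.1 i j h1 h2 (by omega))
        (fun j h1 h2 => hGT.2 i j h1 (by omega) (by omega))
        (fun j h1 h2 => by
          have := hGT.1 (i+1) j h1 (by omega) (by omega)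
          rw [show i+1-1 = i by ring] at this
          exact this)
        (fun j h1 h2 => by
          have := hGT.2 (i+1) j h1 (by omega) (by omega)
          rw [show i+1-1 = i by ring] at this
          exact this)
        (by
          intro j hj0 hj1
          rw [th (j+1) (by omega), tg (j+1) (by omega), tg j (by omega), ta j (by omega)]
          rw [show i+1-(j+1) = i-j by ring, show i-(j+1) = i-j-1 by ring,
              show i-1-j = i-j-1 by ring]
          have H2 := hII j (n-i) (i-j) (by simp [inDelta]; omega) (by simp [inDelta]; omega)
            (by simp [inDelta]; omega) (by simp [inDelta]; omega)
          linarith)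
      -- cnt equations
      have cntI := cnt_eq (tildeGT n P) i c hi1 hc
        (fun j h1 h2 => hGT.1 i j h1 h2 (by omega))
      have cntI1 := cnt_eq (tildeGT n P) (i+1) c (by omega) hc
        (fun j h1 h2 => hGT.1 (i+1) j h1 h2 (by omega))
      rw [show (i+1-1 : ℤ) = i by ring] at cntI1
      -- telescoped sums appearing in cnt equations
      rw [ta (i-1) (by omega), tg (i-1) (by omega),
          show i-1-((i:ℤ)-1) = 0 by ring, show i-((i:ℤ)-1) = 1 by ring] at cntI
      rw [tg i (by omega), th i (by omega),
          show (i:ℤ)-i = 0 by ring, show i+1-i = (1:ℤ) by ring] at cntI1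
      -- split the big sums
      have hs1 : ∑ j ∈ Finset.Ioc (0:ℤ) (i+1), max (tildeGT n P (i+1) j - c) 0
          = (∑ j ∈ Finset.Ioc (0:ℤ) i, max (tildeGT n P (i+1) j - c) 0)
            + max (tildeGT n P (i+1) (i+1) - c) 0 := by
        have h := succIoc (fun j => max (tildeGT n P (i+1) j - c) 0) (k := i) (by omega)
        simpa using h
      have hs2 : ∑ j ∈ Finset.Ioc (0:ℤ) i, max (tildeGT n P i j - c) 0
          = (∑ j ∈ Finset.Ioc (0:ℤ) (i-1), max (tildeGT n P i j - c) 0)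
            + max (tildeGT n P i i - c) 0 := by
        have h := succIoc' (fun j => max (tildeGT n P i j - c) 0) (k := i) (by omega)
        simpa using h
      rw [hs1, hs2] at hcore
      -- diagonal entries in terms of P
      have htii : tildeGT n P i i = P i (n-i) 0 - P (i-1) (n-i) 1 := by
        show P i (n-i) (i-i) - P (i-1) (n-i) (i-i+1) = _
        rw [show (i:ℤ)-i = 0 by ring, show (0:ℤ)+1 = 1 by norm_num]
      have htd1 : tildeGT n P (i+1) (i+1) = P (i+1) (n-i-1) 0 - P i (n-i-1) 1 := by
        show P (i+1) (n-(i+1)) (i+1-(i+1)) - P (i+1-1) (n-(i+1)) (i+1-(i+1)+1) = _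
        rw [show n-(i+1) = n-i-1 by ring, show i+1-(i+1) = (0:ℤ) by ring,
            show i+1-1 = i by ring, show (0:ℤ)+1 = 1 by norm_num]
      have hF4i : tildeGT n P (i+1) (i+1) ≤ tildeGT n P i i := by
        have := hGT.2 (i+1) i (by omega) (by omega) (by omega)
        rw [show i+1-1 = i by ring] at this
        exact this
      omega
end

section
/- The Schützenberger involution ξ(T) = s_1 (s_2 s_1) ⋯ (s_{n−1} s_{n−2} ⋯ s_1)(T) is an involution on Gelfand–Tsetlin patterns of size n: for every GT pattern T of size n, ξ(ξ(T)) = T. -/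
/-- The Bender–Knuth move `s_i` on (the functional encoding of) GT patterns.  An undefined
argument of `min`/`max` (namely `T(i−1,j−1)` when `j = 1`, and `T(i−1,j)` when `j = i`)
is omitted. -/
def BK (i : ℤ) (T : ℤ → ℤ → ℤ) : ℤ → ℤ → ℤ := fun k j =>
  if k = i then
    (if j = 1 then T (i+1) j else min (T (i+1) j) (T (i-1) (j-1))) +
      (if j = i then T (i+1) (j+1) else max (T (i+1) (j+1)) (T (i-1) j)) - T i j
  else T k j

/-- `BKchain m T = s_m (s_{m−1} ⋯ (s_1 T))`. -/
def BKchain : ℕ → (ℤ → ℤ → ℤ) → ℤ → ℤ → ℤ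
  | 0, T => T
  | m+1, T => BK ((m : ℤ) + 1) (BKchain m T)

/-- `xiGT (n-1)` is the Schützenberger involution
`ξ = s_1 (s_2 s_1) ⋯ (s_{n−1} s_{n−2} ⋯ s_1)` for patterns of size `n`
(the rightmost factor applied first). -/
def xiGT : ℕ → (ℤ → ℤ → ℤ) → ℤ → ℤ → ℤ
  | 0, T => T
  | m+1, T => xiGT m (BKchain (m+1) T)


lemma BK_invol (i : ℤ) (T : ℤ → ℤ → ℤ) : BK i (BK i T) = T := by
  funext k j
  by_cases hk : k = i
  · subst hk
    have h1 : k + 1 ≠ k := by omega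
    have h2 : k - 1 ≠ k := by omega
    simp only [BK, if_pos rfl, if_neg h1, if_neg h2, if_true]
    ring
  · simp [BK, hk]

lemma BK_comm (i k : ℤ) (h : i + 2 ≤ k) (T : ℤ → ℤ → ℤ) :
    BK i (BK k T) = BK k (BK i T) := by
  have h1 : i + 1 ≠ k := by omega
  have h2 : i - 1 ≠ k := by omega
  have h3 : i ≠ k := by omega
  have h4 : k + 1 ≠ i := by omega
  have h5 : k - 1 ≠ i := by omega
  have h6 : k ≠ i := by omega
  funext a j
  by_cases ha : a = i
  · subst ha
    simp only [BK, if_pos rfl, if_neg h3, if_neg h1, if_neg h2]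
  · by_cases hb : a = k
    · subst hb
      simp only [BK, if_pos rfl, if_neg h6, if_neg h4, if_neg h5]
    · simp [BK, ha, hb]

/-- `BK k` commutes with `BKchain m` when `m + 2 ≤ k`. -/
lemma BK_BKchain_comm (m : ℕ) (k : ℤ) (h : (m : ℤ) + 2 ≤ k) (T : ℤ → ℤ → ℤ) :
    BK k (BKchain m T) = BKchain m (BK k T) := by
  induction m generalizing T with
  | zero => rfl
  | succ m ih =>
      have hk : ((m : ℤ) + 1) + 2 ≤ k := by push_cast at h ⊢; omega
      have hk' : (m : ℤ) + 2 ≤ k := by omega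
      calc BK k (BKchain (m+1) T) = BK k (BK ((m:ℤ)+1) (BKchain m T)) := rfl
        _ = BK ((m:ℤ)+1) (BK k (BKchain m T)) := by
              rw [BK_comm ((m:ℤ)+1) k (by omega)]
        _ = BK ((m:ℤ)+1) (BKchain m (BK k T)) := by rw [ih hk']
        _ = BKchain (m+1) (BK k T) := rfl

/-- `BK k` commutes with `xiGT m` when `m + 2 ≤ k`. -/
lemma BK_xiGT_comm (m : ℕ) (k : ℤ) (h : (m : ℤ) + 2 ≤ k) (T : ℤ → ℤ → ℤ) :
    BK k (xiGT m T) = xiGT m (BK k T) := by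
  induction m generalizing T with
  | zero => rfl
  | succ m ih =>
      calc BK k (xiGT (m+1) T) = BK k (xiGT m (BKchain (m+1) T)) := rfl
        _ = xiGT m (BK k (BKchain (m+1) T)) := ih (by push_cast at h ⊢; omega) _
        _ = xiGT m (BKchain (m+1) (BK k T)) := by
              rw [BK_BKchain_comm (m+1) k (by push_cast at h ⊢; omega)]
        _ = xiGT (m+1) (BK k T) := rfl

/-- Key identity: `C_{m+1} ∘ ξ_m ∘ C_{m+1} = ξ_m`. -/
lemma keyA : ∀ m : ℕ, ∀ T : ℤ → ℤ → ℤ,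
    BKchain (m+1) (xiGT m (BKchain (m+1) T)) = xiGT m T := by
  intro m
  induction m with
  | zero =>
      intro T
      show BK ((0:ℤ)+1) (BK ((0:ℤ)+1) T) = T
      exact BK_invol _ _
  | succ m ih =>
      -- first derive: C_{m+2} (ξ_{m+1} X) = BK (m+2) (ξ_m X)
      have key : ∀ X : ℤ → ℤ → ℤ,
          BKchain (m+2) (xiGT (m+1) X) = BK ((m:ℤ)+1+1) (xiGT m X) := by
        intro X
        calc BKchain (m+2) (xiGT (m+1) X)
            = BK ((m:ℤ)+1+1) (BKchain (m+1) (xiGT m (BKchain (m+1) X))) := rfl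
          _ = BK ((m:ℤ)+1+1) (xiGT m X) := by rw [ih X]
      intro T
      calc BKchain (m+2) (xiGT (m+1) (BKchain (m+2) T))
          = BK ((m:ℤ)+1+1) (xiGT m (BKchain (m+2) T)) := key _
        _ = BK ((m:ℤ)+1+1) (xiGT m (BK ((m:ℤ)+1+1) (BKchain (m+1) T))) := rfl
        _ = BK ((m:ℤ)+1+1) (BK ((m:ℤ)+1+1) (xiGT m (BKchain (m+1) T))) := by
              exact congrArg _ (BK_xiGT_comm m ((m:ℤ)+1+1) (by omega) _).symm
        _ = xiGT m (BKchain (m+1) T) := BK_invol _ _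
        _ = xiGT (m+1) T := rfl

lemma xiGT_invol (m : ℕ) (T : ℤ → ℤ → ℤ) : xiGT m (xiGT m T) = T := by
  induction m generalizing T with
  | zero => rfl
  | succ m ih =>
      calc xiGT (m+1) (xiGT (m+1) T)
          = xiGT m (BKchain (m+1) (xiGT m (BKchain (m+1) T))) := rfl
        _ = xiGT m (xiGT m T) := by rw [keyA m]
        _ = T := ih T

/-- the Schützenberger involution
`ξ = s_1 (s_2 s_1) ⋯ (s_{n−1} ⋯ s_1)` is an involution on GT patterns of size `n`. -/
theorem stmt17 (n : ℕ) (hn : 1 ≤ n) (T : ℤ → ℤ → ℤ) (hT : IsGTPattern (n : ℤ) T) :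
    ∀ i j : ℤ, 1 ≤ j → j ≤ i → i ≤ (n : ℤ) →
      xiGT (n - 1) (xiGT (n - 1) T) i j = T i j := by
  intro i j _ _ _
  rw [xiGT_invol]
end
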